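/- arXiv:1210.1097 — 5 statements merged into one kernel-verified Lean document; each statement's English description precedes it below -/
import Mathlib

section
/- In any QMV algebra, the relation defined by a ≤ b iff a = a ⊓ b is a partial order (reflexive, antisymmetric, and transitive). -/
/-- A supplement algebra (S-algebra). -/
class SAlg (E : Type*) where
  add : E → E → E
  cpl : E → E
  zero : E
  one : E
  add_comm : ∀ a b : E, add a b = add b a
  add_assoc : ∀ a b c : E, add a (add b c) = add (add a b) c
  add_cpl : ∀ a : E, add a (cpl a) = one
  add_zero : ∀ a : E, add a zero = a
  cpl_cpl : ∀ a : E, cpl (cpl a) = a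
  add_one : ∀ a : E, add a one = one

namespace SAlg
variable {E : Type*} [SAlg E]
/-- a ⊙ b = (a' ⊞ b')'. -/
def odot (a b : E) : E := cpl (add (cpl a) (cpl b))
/-- a ⊓ b = (a ⊞ b') ⊙ b. -/
def scap (a b : E) : E := odot (add a (cpl b)) b
/-- a ⊔ b = (a ⊙ b') ⊞ b. -/
def scup (a b : E) : E := add (odot a (cpl b)) b
/-- The QMV order: a ≤ b iff a = a ⊓ b. -/
def sle (a b : E) : Prop := a = scap a b
end SAlg
/-- A quantum MV (QMV) algebra. -/
class QMV (E : Type*) extends SAlg E where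
  qmv1 : ∀ a b : E, SAlg.scup a (SAlg.scap b a) = a
  qmv2 : ∀ a b c : E,
    SAlg.scap (SAlg.scap a b) c = SAlg.scap (SAlg.scap a b) (SAlg.scap b c)
  qmv3 : ∀ a b c : E,
    add a (SAlg.scap b (cpl (add a c)))
      = SAlg.scap (add a b) (add a (cpl (add a c)))
  qmv4 : ∀ a b : E, add a (SAlg.scap (cpl a) b) = add a b
  qmv5 : ∀ a b : E, SAlg.scup (add (cpl a) b) (add (cpl b) a) = one

namespace SAlg
variable {E : Type*} [SAlg E]

lemma zero_add (a : E) : add zero a = a := by rw [add_comm, add_zero]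

lemma cpl_zero : cpl (zero : E) = one := by
  rw [← zero_add (cpl zero), add_cpl]

lemma cpl_one : cpl (one : E) = zero := by
  rw [← cpl_zero, cpl_cpl]

lemma scap_self (a : E) : scap a a = a := by
  rw [scap, add_cpl, odot, cpl_one, zero_add, cpl_cpl]

lemma sle_refl (a : E) : sle a a := (scap_self a).symm

lemma cpl_add_eq_one_of_sle {a b : E} (h : sle a b) : add (cpl a) b = one := by
  have ha : cpl a = add (cpl (add a (cpl b))) (cpl b) :=
    calc cpl a = cpl (scap a b) := congrArg cpl h
      _ = add (cpl (add a (cpl b))) (cpl b) := cpl_cpl _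
  rw [ha, ← add_assoc, add_comm (cpl b) b, add_cpl, add_one]

lemma odot_cpl_eq_zero_of_sle {a b : E} (h : sle a b) : odot a (cpl b) = zero := by
  rw [odot, cpl_cpl, cpl_add_eq_one_of_sle h, cpl_one]

lemma scup_eq_right_of_sle {a b : E} (h : sle a b) : scup a b = b := by
  rw [scup, odot_cpl_eq_zero_of_sle h, zero_add]

end SAlg

namespace QMV
open SAlg
variable {E : Type*} [QMV E]

lemma scup_eq_left_of_sle {a b : E} (h : sle b a) : scup a b = a := by
  rw [h]
  exact qmv1 a b

lemma sle_antisymm {a b : E} (hab : sle a b) (hba : sle b a) : a = b :=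
  (scup_eq_left_of_sle hba).symm.trans (scup_eq_right_of_sle hab)

lemma sle_trans {a b c : E} (hab : sle a b) (hbc : sle b c) : sle a c := by
  -- QMV2 collapses to a ⊓ c = a ⊓ b = a once a ⊓ b = a and b ⊓ c = b.
  have h := qmv2 a b c
  rw [← hab, ← hbc, ← hab] at h
  exact h.symm

end QMV

/-- In any QMV algebra, the relation a ≤ b iff a = a ⊓ b is a partial order. -/
theorem qmv_sle_partial_order {E : Type*} [QMV E] :
    (∀ a : E, SAlg.sle a a) ∧
    (∀ a b : E, SAlg.sle a b → SAlg.sle b a → a = b) ∧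
    (∀ a b c : E, SAlg.sle a b → SAlg.sle b c → SAlg.sle a c) :=
  ⟨SAlg.sle_refl, fun _ _ => QMV.sle_antisymm, fun _ _ _ => QMV.sle_trans⟩
end

section
/- In any lattice-ordered QMV algebra, ⊞ is monotone in each argument: if a ≤ b then a ⊞ c ≤ b ⊞ c for all c. -/
namespace SAlg

variable {E : Type*} [SAlg E]

lemma scap_one (a : E) : scap a one = a := by
  simp only [scap, odot, cpl_one, SAlg.add_zero, cpl_cpl]

lemma cpl_add_cpl_add (b c : E) : cpl (add c (cpl (add b c))) = scap b (cpl c) := by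
  simp only [scap, odot, cpl_cpl, SAlg.add_comm c]

end SAlg

namespace QMV

open SAlg

variable {E : Type*} [QMV E]

lemma add_scap_cpl (a b : E) : add a (scap b (cpl a)) = add a b := by
  simpa only [SAlg.add_zero, add_cpl, scap_one] using qmv3 a b zero

lemma scap_scap_of_sle {a b : E} (h : sle a b) (c : E) : scap a (scap b c) = scap a c := by
  have key := qmv2 a b c
  rw [show scap a b = a from h.symm] at key
  exact key.symm

/-- QMV3 with `z := (b ⊞ c)'`: then `(c ⊞ z)' = b ⊓ c'`, and `a ⊓ (b ⊓ c') = a ⊓ c'` lets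
`add_scap_cpl` collapse both sides to `c ⊞ a = (c ⊞ a) ⊓ (c ⊞ b)`. -/
lemma sle_add_left {a b : E} (h : sle a b) (c : E) : sle (add c a) (add c b) := by
  have key := qmv3 c a (cpl (add b c))
  rwa [cpl_add_cpl_add, scap_scap_of_sle h, add_scap_cpl, add_scap_cpl] at key

lemma sle_add_right {a b : E} (h : sle a b) (c : E) : sle (add a c) (add b c) := by
  simpa only [SAlg.add_comm _ c] using sle_add_left h c

end QMV

/-- In any lattice-ordered QMV algebra, ⊞ is monotone in each argument. -/
theorem qmv_add_monotone {E : Type*} [QMV E] [Lattice E]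
    (hord : ∀ a b : E, a ≤ b ↔ SAlg.sle a b) :
    ∀ a b c : E, a ≤ b → SAlg.add a c ≤ SAlg.add b c := by
  intro a b c hab
  rw [hord] at hab ⊢
  exact QMV.sle_add_right hab c
end

section
/- An extended lattice-ordered effect algebra E is a linear MV algebra (i.e., an MV algebra whose order is total) if and only if (a ⊞ b) ∧ (a ⊞ c) = a ⊞ (b ∧ c) for all a, b, c in E. -/
/-- An effect algebra, with a partial sum modelled via `Option`. -/
class EffectAlg (P : Type*) where
  zero : P
  one : P
  padd : P → P → Option P
  zero_ne_one : zero ≠ one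
  /-- (E1) commutativity. -/
  padd_comm : ∀ a b : P, padd a b = padd b a
  /-- (E2) associativity where defined. -/
  padd_assoc : ∀ a b c bc s : P, padd b c = some bc → padd a bc = some s →
    ∃ ab : P, padd a b = some ab ∧ padd ab c = some s
  /-- (E3) orthosupplement. -/
  cpl : P → P
  padd_cpl : ∀ a : P, padd a (cpl a) = some one
  cpl_unique : ∀ a b : P, padd a b = some one → b = cpl a
  /-- (E4) zero-one law. -/
  one_law : ∀ a b : P, padd one a = some b → a = zero

namespace EffectAlg
variable {P : Type*} [EffectAlg P]
/-- The totalized sum: a ⊞ b = a ⊕ b if defined, 1 otherwise. -/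
def bplus (a b : P) : P := (padd a b).getD one
/-- a ⊙ b = (a' ⊞ b')'. -/
def odot (a b : P) : P := cpl (bplus (cpl a) (cpl b))
/-- a ⊓ b = (a ⊞ b') ⊙ b. -/
def scap (a b : P) : P := odot (bplus a (cpl b)) b
end EffectAlg

/-!
For `a ≤ b` both `(a' ⊞ b)' ⊞ b` and `(b' ⊞ a)' ⊞ a` equal `b`, so on a chain the MV identity
holds; and `a ⊞ ·` is monotone, so on a chain it commutes with `⊓`. Conversely, write
`a = (a ∧ b) ⊕ x` and `b = (a ∧ b) ⊕ y`. Then `x ∧ y = 0`, and distributivity at `x'` gives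
`x' ⊞ y = (x' ⊞ x) ∧ (x' ⊞ y) = x' ⊞ (x ∧ y) = x'`, which forces `x = 0` (so `a ≤ b`) or
`y = 0` (so `b ≤ a`).
-/

theorem Monotone.map_inf_of_le_or_le {α β : Type*} [Lattice α] [Lattice β] {f : α → β}
    (hf : Monotone f) {b c : α} (h : b ≤ c ∨ c ≤ b) : f (b ⊓ c) = f b ⊓ f c := by
  rcases h with h | h
  · rw [inf_eq_left.mpr h, inf_eq_left.mpr (hf h)]
  · rw [inf_eq_right.mpr h, inf_eq_right.mpr (hf h)]

namespace EffectAlg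

variable {P : Type*} [EffectAlg P]

def IsEffectOrder (P : Type*) [EffectAlg P] [LE P] : Prop :=
  ∀ a b : P, a ≤ b ↔ ∃ c : P, padd a c = some b

/-- In MV-algebra terms this is `a ∨ b`. -/
def mvSup (a b : P) : P := bplus (cpl (bplus (cpl a) b)) b

theorem cpl_padd (a : P) : padd (cpl a) a = some one := by
  rw [padd_comm]; exact padd_cpl a

theorem cpl_cpl (a : P) : cpl (cpl a) = a :=
  (cpl_unique (cpl a) a (cpl_padd a)).symm

theorem cpl_one : cpl (one : P) = zero :=
  one_law (cpl one) one (padd_cpl one)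

theorem zero_padd (a : P) : padd (zero : P) a = some a := by
  have h0 : padd (zero : P) one = some one := by
    rw [← cpl_one]; exact cpl_padd one
  obtain ⟨t, hzt, hta'⟩ := padd_assoc zero a (cpl a) one one (padd_cpl a) h0
  have hta : t = a := by
    rw [cpl_unique (cpl a) t (by rw [padd_comm]; exact hta'), cpl_cpl]
  rwa [hta] at hzt

theorem padd_zero (a : P) : padd a (zero : P) = some a := by
  rw [padd_comm]; exact zero_padd a

theorem padd_left_cancel {a b c d : P} (hb : padd a b = some c) (hd : padd a d = some c) :
    b = d := by
  obtain ⟨e, he, heb⟩ := padd_assoc (cpl c) a b c one hb (cpl_padd c)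
  obtain ⟨e', he', hed⟩ := padd_assoc (cpl c) a d c one hd (cpl_padd c)
  have hee' : e = e' := Option.some.inj (he.symm.trans he')
  rw [cpl_unique e b heb, cpl_unique e' d hed, hee']

theorem cpl_padd_of_padd {a b s : P} (h : padd a b = some s) : padd (cpl s) a = some (cpl b) := by
  obtain ⟨e, he, heb⟩ := padd_assoc (cpl s) a b s one h (cpl_padd s)
  rwa [← cpl_unique b e (by rw [padd_comm]; exact heb)]

theorem bplus_of_padd {a b s : P} (h : padd a b = some s) : bplus a b = s := by
  rw [bplus, h]; rfl

theorem bplus_of_padd_eq_none {a b : P} (h : padd a b = none) : bplus a b = one := by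
  rw [bplus, h]; rfl

theorem bplus_comm (a b : P) : bplus a b = bplus b a := by
  rw [bplus, bplus, padd_comm]

theorem eq_zero_or_eq_zero_of_bplus_cpl_eq {x y : P} (h : bplus (cpl x) y = cpl x) :
    x = zero ∨ y = zero := by
  cases hxy : padd (cpl x) y with
  | none =>
    rw [bplus_of_padd_eq_none hxy] at h
    left
    rw [← cpl_cpl x, ← h, cpl_one]
  | some s =>
    rw [bplus_of_padd hxy] at h
    right
    exact padd_left_cancel (h ▸ hxy) (padd_zero _)

section Order

variable [LE P]

theorem le_of_padd (hord : IsEffectOrder P) {a b c : P} (h : padd a c = some b) : a ≤ b :=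
  (hord a b).mpr ⟨c, h⟩

theorem le_one (hord : IsEffectOrder P) (a : P) : a ≤ one :=
  le_of_padd hord (padd_cpl a)

theorem exists_padd_of_le_cpl (hord : IsEffectOrder P) {a b : P} (h : a ≤ cpl b) :
    ∃ s, padd a b = some s := by
  obtain ⟨c, hc⟩ := (hord a (cpl b)).mp h
  obtain ⟨e, he, -⟩ := padd_assoc b a c (cpl b) one hc (padd_cpl b)
  exact ⟨e, by rw [padd_comm]; exact he⟩

theorem exists_padd_le_of_le (hord : IsEffectOrder P) {a b c s : P} (hbc : b ≤ c)
    (h : padd a c = some s) : ∃ t, padd a b = some t ∧ t ≤ s := by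
  obtain ⟨e, he⟩ := (hord b c).mp hbc
  obtain ⟨t, ht, hts⟩ := padd_assoc a b e c s he h
  exact ⟨t, ht, le_of_padd hord hts⟩

/-- `a' ⊕ b` can only be defined for `a ≤ b` when `b = a`, by the zero-one law. -/
theorem bplus_cpl_eq_one_of_le (hord : IsEffectOrder P) {a b : P} (h : a ≤ b) :
    bplus (cpl a) b = one := by
  obtain ⟨c, hc⟩ := (hord a b).mp h
  cases ht : padd (cpl a) b with
  | none => exact bplus_of_padd_eq_none ht
  | some t =>
    obtain ⟨u, hu, hut⟩ := padd_assoc (cpl a) a c b t hc ht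
    rw [cpl_padd a, Option.some.injEq] at hu
    subst hu
    rw [one_law c t hut, padd_zero, Option.some.injEq] at hut
    rw [bplus_of_padd ht, hut]

theorem mvSup_eq_right_of_le (hord : IsEffectOrder P) {a b : P} (h : a ≤ b) : mvSup a b = b := by
  rw [mvSup, bplus_cpl_eq_one_of_le hord h, cpl_one, bplus_of_padd (zero_padd b)]

theorem mvSup_eq_left_of_le (hord : IsEffectOrder P) {a b : P} (h : a ≤ b) : mvSup b a = b := by
  obtain ⟨s, hs⟩ := exists_padd_of_le_cpl hord (b := cpl b) (by rwa [cpl_cpl])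
  rw [mvSup, bplus_comm (cpl b), bplus_of_padd hs, bplus_of_padd (cpl_padd_of_padd hs), cpl_cpl]

theorem mvSup_comm_of_le_or_le (hord : IsEffectOrder P) {a b : P} (h : a ≤ b ∨ b ≤ a) :
    mvSup a b = mvSup b a := by
  rcases h with h | h
  · rw [mvSup_eq_right_of_le hord h, mvSup_eq_left_of_le hord h]
  · rw [mvSup_eq_left_of_le hord h, mvSup_eq_right_of_le hord h]

end Order

theorem monotone_bplus [Preorder P] (hord : IsEffectOrder P) (a : P) : Monotone (bplus a) := by
  intro b c hbc
  cases hc : padd a c with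
  | none => rw [bplus_of_padd_eq_none hc]; exact le_one hord _
  | some s =>
    obtain ⟨t, ht, hts⟩ := exists_padd_le_of_le hord hbc hc
    rwa [bplus_of_padd ht, bplus_of_padd hc]

section Lattice

variable [Lattice P]

theorem inf_eq_zero_of_padd_inf (hord : IsEffectOrder P) {a b x y : P}
    (hx : padd (a ⊓ b) x = some a) (hy : padd (a ⊓ b) y = some b) : x ⊓ y = zero := by
  obtain ⟨t, ht, hta⟩ := exists_padd_le_of_le hord inf_le_left hx
  obtain ⟨t', ht', htb⟩ := exists_padd_le_of_le hord inf_le_right hy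
  have htt' : t = t' := Option.some.inj (ht.symm.trans ht')
  have ht_inf : t = a ⊓ b := le_antisymm (le_inf hta (htt' ▸ htb)) (le_of_padd hord ht)
  exact padd_left_cancel (ht_inf ▸ ht) (padd_zero _)

theorem le_or_le_of_bplus_inf (hord : IsEffectOrder P)
    (hdist : ∀ a b c : P, bplus a b ⊓ bplus a c = bplus a (b ⊓ c)) (a b : P) :
    a ≤ b ∨ b ≤ a := by
  obtain ⟨x, hx⟩ := (hord (a ⊓ b) a).mp inf_le_left
  obtain ⟨y, hy⟩ := (hord (a ⊓ b) b).mp inf_le_right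
  have hxy : bplus (cpl x) y = cpl x := by
    have h := hdist (cpl x) x y
    rwa [inf_eq_zero_of_padd_inf hord hx hy, bplus_of_padd (cpl_padd x),
      bplus_of_padd (padd_zero _), inf_eq_right.mpr (le_one hord _)] at h
  rcases eq_zero_or_eq_zero_of_bplus_cpl_eq hxy with rfl | rfl
  · rw [padd_zero, Option.some.injEq] at hx
    exact Or.inl (hx ▸ inf_le_right)
  · rw [padd_zero, Option.some.injEq] at hy
    exact Or.inr (hy ▸ inf_le_left)

end Lattice

end EffectAlg

open EffectAlg in
/-- An extended lattice-ordered effect algebra is a linear MV algebra iff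
(a ⊞ b) ∧ (a ⊞ c) = a ⊞ (b ∧ c) for all a, b, c. -/
theorem extended_effect_linear_mv_iff_distrib {P : Type*} [EffectAlg P] [Lattice P]
    (hord : ∀ a b : P, a ≤ b ↔ ∃ c : P, EffectAlg.padd a c = some b) :
    ((∀ a b : P,
        EffectAlg.bplus (EffectAlg.cpl (EffectAlg.bplus (EffectAlg.cpl a) b)) b
          = EffectAlg.bplus (EffectAlg.cpl (EffectAlg.bplus a (EffectAlg.cpl b))) a) ∧
      (∀ a b : P, a ≤ b ∨ b ≤ a))
    ↔ (∀ a b c : P,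
        EffectAlg.bplus a b ⊓ EffectAlg.bplus a c = EffectAlg.bplus a (b ⊓ c)) := by
  constructor
  · rintro ⟨-, htot⟩ a b c
    exact ((monotone_bplus hord a).map_inf_of_le_or_le (htot b c)).symm
  · intro hdist
    have htot := le_or_le_of_bplus_inf hord hdist
    refine ⟨fun a b => ?_, htot⟩
    rw [bplus_comm a]
    exact mvSup_comm_of_le_or_le hord (htot a b)
end

section
/- The extended effect algebra obtained from an effect algebra by totalizing ⊕ (setting a ⊞ b = 1 when a ⊕ b is undefined) preserves the effect-algebra order: a ≤ b in the effect algebra (i.e., there exists c with a ⊕ c = b) if and only if a ≤ b in the resulting QMV structure (i.e., a = a ⊓ b where a⊓b = (a⊞b')⊙b and a⊙b = (a'⊞b')'). -/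
/-!
For `a ≤ b` witnessed by `a ⊕ c = b`, associativity against `b' ⊕ b = 1` gives `a ⊕ b' = c'` and
`c ⊕ b' = a'`, so `a ⊓ b = (c' ⊞ b') ⊙ b = (c ⊞ b')' = a`. Conversely `x ⊙ b ≤ b` for every `x`,
because `b' ≤ x' ⊞ b'` and the orthosupplement reverses the order; so `a = a ⊓ b` forces `a ≤ b`.
-/

namespace EffectAlg

variable {P : Type*} [EffectAlg P]

instance : LE P := ⟨fun a b => ∃ c, padd a c = some b⟩

theorem padd_cpl_of_padd {a b c : P} (h : padd a c = some b) :
    padd c (cpl b) = some (cpl a) := by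
  obtain ⟨x, hbc, hxa⟩ :=
    padd_assoc (cpl b) c a b one (padd_comm c a ▸ h) (padd_comm b (cpl b) ▸ padd_cpl b)
  have hx : x = cpl a := cpl_unique a x (padd_comm x a ▸ hxa)
  rw [padd_comm, hbc, hx]

theorem cpl_le_cpl {a b : P} (h : a ≤ b) : cpl b ≤ cpl a := by
  obtain ⟨c, hc⟩ := h
  exact ⟨c, padd_comm (cpl b) c ▸ padd_cpl_of_padd hc⟩

theorem le_bplus_right (a b : P) : b ≤ bplus a b := by
  rcases hab : padd a b with _ | s
  · exact ⟨cpl b, by rw [bplus, hab, Option.getD_none, padd_cpl]⟩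
  · exact ⟨a, by rw [bplus, hab, Option.getD_some, padd_comm, hab]⟩

theorem odot_le_right (a b : P) : odot a b ≤ b := by
  simpa only [odot, cpl_cpl] using cpl_le_cpl (le_bplus_right (cpl a) (cpl b))

theorem scap_eq_left_of_le {a b : P} (h : a ≤ b) : scap a b = a := by
  obtain ⟨c, hc⟩ := h
  have hab : padd a (cpl b) = some (cpl c) := padd_cpl_of_padd (padd_comm a c ▸ hc)
  have hcb : padd c (cpl b) = some (cpl a) := padd_cpl_of_padd hc
  simp only [scap, odot, bplus, hab, Option.getD_some, cpl_cpl, hcb]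

theorem le_iff_eq_scap (a b : P) : a ≤ b ↔ a = scap a b :=
  ⟨fun h => (scap_eq_left_of_le h).symm, fun h => h ▸ odot_le_right _ b⟩

end EffectAlg

/-- The extended effect algebra preserves the effect-algebra order:
a ≤ b (∃ c, a ⊕ c = b) iff a = a ⊓ b in the QMV structure. -/
theorem extended_effect_preserves_order {P : Type*} [EffectAlg P] :
    ∀ a b : P, (∃ c : P, EffectAlg.padd a c = some b) ↔ a = EffectAlg.scap a b :=
  EffectAlg.le_iff_eq_scap
end

section
/- Let E be a locally finite QMV algebra and let R ⊆ E be a finite subset. Then the set R^⊞ = {a_1 ⊞ a_2 ⊞ ⋯ ⊞ a_n : a_i ∈ R, n ∈ ℕ} ∪ {0} is finite. -/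
/-- n·a = a ⊞ a ⊞ ⋯ ⊞ a (n times). -/
def nadd {E : Type*} [SAlg E] (n : ℕ) (a : E) : E :=
  match n with
  | 0 => SAlg.zero
  | n + 1 => SAlg.add a (nadd n a)

/-! A commutative monoid generated by finitely many elements with finitely many multiples each
is finite, since every element is a sum `∑ kᵢ • aᵢ` over the generators. In a locally finite
S-algebra, `⊞` makes `E` a commutative monoid in which `1` is absorbing, so `n • a = 1` leaves
`a` only the multiples `0, a, …, (n - 1) • a, 1`. -/

section Multiples

variable {M : Type*} [AddCommMonoid M]

theorem finite_range_nsmul_of_nsmul_eq_absorbing {t a : M} (ht : ∀ x, x + t = t) {n : ℕ}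
    (hn : n • a = t) : (Set.range (· • a : ℕ → M)).Finite := by
  refine (((Finset.range n).finite_toSet.image (· • a)).insert t).subset ?_
  rintro _ ⟨k, rfl⟩
  rcases lt_or_ge k n with hk | hk
  · exact Or.inr ⟨k, Finset.mem_range.mpr hk, rfl⟩
  · left
    dsimp only
    rw [← Nat.sub_add_cancel hk, add_nsmul, hn, ht]

theorem AddSubmonoid.finite_closure_of_finite_range_nsmul {s : Set M} (hs : s.Finite)
    (h : ∀ a ∈ s, (Set.range (· • a : ℕ → M)).Finite) : (closure s : Set M).Finite := by
  have := hs.fintype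
  have : ∀ a : s, Finite (Set.range (· • a.1 : ℕ → M)) := fun a ↦ (h a a.2).to_subtype
  refine (Set.finite_range fun g : (a : s) → Set.range (· • a.1 : ℕ → M) ↦ ∑ a, (g a : M)).subset
    ?_
  intro x hx
  obtain ⟨k, rfl⟩ := mem_closure_iff_of_fintype.mp hx
  exact ⟨fun a ↦ ⟨k a • a.1, k a, rfl⟩, rfl⟩

end Multiples

/-- `⊞` and `0` as an additive commutative monoid, with `n • a` defined to be `nadd n a`.
Not a global instance, since it would apply to every type. -/
abbrev SAlg.toAddCommMonoid {E : Type*} [SAlg E] : AddCommMonoid E where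
  add := SAlg.add
  zero := SAlg.zero
  add_assoc a b c := (SAlg.add_assoc a b c).symm
  zero_add a := show SAlg.add SAlg.zero a = a from (SAlg.add_comm _ _).trans (SAlg.add_zero a)
  add_zero := SAlg.add_zero
  add_comm := SAlg.add_comm
  nsmul := nadd
  nsmul_zero a := nadd.eq_1 a
  nsmul_succ n a := (nadd.eq_2 a n).trans (SAlg.add_comm _ _)

attribute [local instance] SAlg.toAddCommMonoid

/-- In a locally finite QMV algebra, the ⊞-closure of a finite subset
(together with 0) is finite. -/
theorem locally_finite_boxplus_closure_finite {E : Type*} [QMV E]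
    (hlf : ∀ a : E, a ≠ SAlg.zero → ∃ n : ℕ, nadd n a = SAlg.one)
    (R : Set E) (hR : R.Finite) :
    Set.Finite {x : E | ∃ l : List E, (∀ a ∈ l, a ∈ R) ∧ x = l.foldr SAlg.add SAlg.zero} := by
  have hmultiples (a : E) : (Set.range (· • a : ℕ → E)).Finite := by
    by_cases ha : a = 0
    · simp [ha]
    · obtain ⟨n, hn⟩ := hlf a ha
      exact finite_range_nsmul_of_nsmul_eq_absorbing SAlg.add_one hn
  refine (AddSubmonoid.finite_closure_of_finite_range_nsmul hR fun a _ ↦ hmultiples a).subset ?_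
  rintro _ ⟨l, hl, rfl⟩
  -- `l.foldr SAlg.add SAlg.zero` is `l.sum` by definition
  exact AddSubmonoid.list_sum_mem _ fun a ha ↦ AddSubmonoid.subset_closure (hl a ha)
end
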